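/- arXiv:2502.09381 — 11 statements merged into one kernel-verified Lean document; each statement's English description precedes it below -/
import Mathlib

section
/- Let N_p ≥ 2 and let Q ∈ ℝ^{N_p×N_p} satisfy the summation-by-parts property Q + Qᵀ = B, where B is the diagonal matrix with diagonal entries (−1, 0, …, 0, 1), and Q·𝟙 = 0 (zero row sums), where 𝟙 is the all-ones vector. Let B_L ∈ ℝ^{N_p×N_p} be the matrix whose only nonzero entry is a 1 in position (1, N_p), and let B_R = B_Lᵀ. For K ≥ 3, define the block-circulant matrix Q_Ω ∈ ℝ^{K N_p × K N_p} whose (k,k) diagonal blocks equal ½(Q − Qᵀ), whose (k, k+1) superdiagonal blocks equal ½B_R, whose (k+1, k) subdiagonal blocks equal −½B_L, and whose corner blocks are −½B_L in position (1,K) and ½B_R in position (K,1), all other blocks zero. Then Q_Ω is skew-symmetric, Q_Ω + Q_Ωᵀ = 0, and Q_Ω has zero row sums, Q_Ω·𝟙 = 0. -/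
set_option maxHeartbeats 2000000

open Matrix

/-- The global block-circulant DG differentiation matrix on a 1D periodic domain
is skew-symmetric with zero row sums. -/
theorem stmt0 (Np K : ℕ) (hNp : 2 ≤ Np) (hK : 3 ≤ K)
    (Q : Matrix (Fin Np) (Fin Np) ℝ)
    (hSBP : Q + Qᵀ = Matrix.diagonal (fun i : Fin Np =>
      if i.val = 0 then (-1 : ℝ) else if i.val = Np - 1 then 1 else 0))
    (hQ1 : Q *ᵥ (fun _ => (1 : ℝ)) = 0)
    (BL BR : Matrix (Fin Np) (Fin Np) ℝ)
    (hBL : ∀ i j : Fin Np, BL i j = if i.val = 0 ∧ j.val = Np - 1 then (1 : ℝ) else 0)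
    (hBR : BR = BLᵀ)
    (QΩ : Matrix (Fin K × Fin Np) (Fin K × Fin Np) ℝ)
    (hQΩ : ∀ (k k' : Fin K) (i j : Fin Np),
      QΩ (k, i) (k', j) =
        if k'.val = k.val then (1 / 2 : ℝ) * (Q i j - Q j i)
        else if k'.val = (k.val + 1) % K then (1 / 2 : ℝ) * BR i j
        else if k'.val = (k.val + K - 1) % K then -(1 / 2 : ℝ) * BL i j
        else 0) :
    QΩ + QΩᵀ = 0 ∧ QΩ *ᵥ (fun _ => (1 : ℝ)) = 0 := by
  haveI : NeZero Np := ⟨by omega⟩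
  have hK0 : 0 < K := by omega
  have hmod1 : ∀ c : Fin K, ((c : ℕ) + 1) % K = if (c : ℕ) + 1 = K then 0 else (c : ℕ) + 1 := by
    intro c
    have hc := c.isLt
    split_ifs with h
    · rw [h, Nat.mod_self]
    · exact Nat.mod_eq_of_lt (by omega)
  have hmod2 : ∀ c : Fin K, ((c : ℕ) + K - 1) % K = if (c : ℕ) = 0 then K - 1 else (c : ℕ) - 1 := by
    intro c
    have hc := c.isLt
    split_ifs with h
    · have h2 : (c : ℕ) + K - 1 = K - 1 := by omega
      rw [h2]
      exact Nat.mod_eq_of_lt (by omega)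
    · rw [show (c : ℕ) + K - 1 = ((c : ℕ) - 1) + 1 * K by omega,
        Nat.add_mul_mod_self_right]
      exact Nat.mod_eq_of_lt (by omega)
  -- row sums of Q
  have hQrow : ∀ i : Fin Np, ∑ j, Q i j = 0 := by
    intro i
    have := congrFun hQ1 i
    simpa [Matrix.mulVec, dotProduct] using this
  -- entrywise SBP
  have hS : ∀ i j : Fin Np, Q i j + Q j i =
      if i = j then (if (i : ℕ) = 0 then (-1 : ℝ) else if (i : ℕ) = Np - 1 then 1 else 0) else 0 := by
    intro i j
    have := congrFun (congrFun hSBP i) j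
    simpa [Matrix.add_apply, Matrix.transpose_apply, Matrix.diagonal_apply] using this
  -- column sums
  have hQcol : ∀ i : Fin Np, ∑ j, Q j i =
      (if (i : ℕ) = 0 then (-1 : ℝ) else if (i : ℕ) = Np - 1 then 1 else 0) := by
    intro i
    have h1 : ∑ j, Q j i = ∑ j, ((if i = j then (if (i : ℕ) = 0 then (-1 : ℝ) else if (i : ℕ) = Np - 1 then 1 else 0) else 0) - Q i j) := by
      apply Finset.sum_congr rfl
      intro j _
      have := hS i j
      linarith
    rw [h1, Finset.sum_sub_distrib, hQrow, Finset.sum_ite_eq]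
    simp
  constructor
  · -- skew-symmetry
    ext ⟨k, i⟩ ⟨k', j⟩
    simp only [Matrix.add_apply, Matrix.transpose_apply, Matrix.zero_apply, hQΩ, hBR,
      Matrix.transpose_apply, hBL]
    rw [hmod1 k, hmod2 k, hmod1 k', hmod2 k']
    have hk := k.isLt
    have hk' := k'.isLt
    split_ifs <;> first | omega | ring1 | norm_num
  · -- zero row sums
    funext p
    obtain ⟨k, i⟩ := p
    have hk := k.isLt
    show ∑ q : Fin K × Fin Np, QΩ (k, i) q * 1 = 0
    simp only [mul_one]
    rw [Fintype.sum_prod_type]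
    -- inner sums
    have hT : ∑ j, (1 / 2 : ℝ) * (Q i j - Q j i) =
        -(1 / 2 : ℝ) * (if (i : ℕ) = 0 then (-1 : ℝ) else if (i : ℕ) = Np - 1 then 1 else 0) := by
      have h : ∑ j, (1 / 2 : ℝ) * (Q i j - Q j i)
          = (1 / 2 : ℝ) * ((∑ j, Q i j) - ∑ j, Q j i) := by
        rw [← Finset.sum_sub_distrib, Finset.mul_sum]
      rw [h, hQrow, hQcol]
      ring
    have hjeq : ∀ j : Fin Np, ((j : ℕ) = Np - 1) ↔ j = (⟨Np - 1, by omega⟩ : Fin Np) := by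
      intro j
      constructor
      · intro h; exact Fin.ext h
      · intro h; rw [h]
    have hjeq0 : ∀ j : Fin Np, ((j : ℕ) = 0) ↔ j = (⟨0, by omega⟩ : Fin Np) := by
      intro j
      constructor
      · intro h; exact Fin.ext h
      · intro h; rw [h]
    have hU : ∑ j, (1 / 2 : ℝ) * BR i j = if (i : ℕ) = Np - 1 then (1 / 2 : ℝ) else 0 := by
      simp only [hBR, Matrix.transpose_apply, hBL]
      by_cases hi : (i : ℕ) = Np - 1
      · simp only [hi, and_true, hjeq0]
        simp [mul_ite, mul_one, mul_zero, Finset.sum_ite_eq', hi]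
        rw [Fintype.sum_eq_single 0 (fun b hb => by simp [hb])]; simp
      · simp [hi]
    have hV : ∑ j, -(1 / 2 : ℝ) * BL i j = if (i : ℕ) = 0 then -(1 / 2 : ℝ) else 0 := by
      simp only [hBL]
      by_cases hi : (i : ℕ) = 0
      · simp only [hi, true_and, hjeq]
        simp [mul_ite, mul_one, mul_zero, Finset.sum_ite_eq', hi]
      · simp [hi]
    -- the three relevant block columns
    have hkbl : ((k : ℕ) + 1) % K < K := Nat.mod_lt _ hK0
    have hkcl : ((k : ℕ) + K - 1) % K < K := Nat.mod_lt _ hK0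
    set kb : Fin K := ⟨((k : ℕ) + 1) % K, hkbl⟩ with hkb
    set kc : Fin K := ⟨((k : ℕ) + K - 1) % K, hkcl⟩ with hkc
    have hvb : (kb : ℕ) = ((k : ℕ) + 1) % K := rfl
    have hvc : (kc : ℕ) = ((k : ℕ) + K - 1) % K := rfl
    have hdist1 : k ≠ kb := by
      intro h
      have h2 := congrArg Fin.val h
      rw [hvb, hmod1 k] at h2
      split_ifs at h2 <;> omega
    have hdist2 : k ≠ kc := by
      intro h
      have h2 := congrArg Fin.val h
      rw [hvc, hmod2 k] at h2
      split_ifs at h2 <;> omega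
    have hdist3 : kb ≠ kc := by
      intro h
      have h2 := congrArg Fin.val h
      rw [hvb, hvc, hmod1 k, hmod2 k] at h2
      split_ifs at h2 <;> omega
    have hsplit : ∀ (k' : Fin K) (j : Fin Np), QΩ (k, i) (k', j) =
        (if k' = k then (1 / 2 : ℝ) * (Q i j - Q j i) else 0)
        + ((if k' = kb then (1 / 2 : ℝ) * BR i j else 0)
          + (if k' = kc then -(1 / 2 : ℝ) * BL i j else 0)) := by
      intro k' j
      rw [hQΩ]
      by_cases h1 : k' = k
      · have c1 : (k' : ℕ) = (k : ℕ) := by rw [h1]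
        have n2 : k' ≠ kb := by rw [h1]; exact hdist1
        have n3 : k' ≠ kc := by rw [h1]; exact hdist2
        rw [if_pos c1, if_pos h1, if_neg n2, if_neg n3]
        ring
      · have n1 : ¬ ((k' : ℕ) = (k : ℕ)) := fun h => h1 (Fin.ext h)
        by_cases h2 : k' = kb
        · have c2 : (k' : ℕ) = ((k : ℕ) + 1) % K := by rw [h2]
          have n3 : k' ≠ kc := by rw [h2]; exact hdist3
          rw [if_neg n1, if_pos c2, if_neg h1, if_pos h2, if_neg n3]
          ring
        · have n2 : ¬ ((k' : ℕ) = ((k : ℕ) + 1) % K) := fun h => h2 (Fin.ext h)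
          by_cases h3 : k' = kc
          · have c3 : (k' : ℕ) = ((k : ℕ) + K - 1) % K := by rw [h3]
            rw [if_neg n1, if_neg n2, if_pos c3, if_neg h1, if_neg h2, if_pos h3]
            ring
          · have n3 : ¬ ((k' : ℕ) = ((k : ℕ) + K - 1) % K) := fun h => h3 (Fin.ext h)
            rw [if_neg n1, if_neg n2, if_neg n3, if_neg h1, if_neg h2, if_neg h3]
            ring
    have hinner : ∀ k' : Fin K, (∑ j, QΩ (k, i) (k', j)) =
        (if k' = k then ∑ j, (1 / 2 : ℝ) * (Q i j - Q j i) else 0)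
        + ((if k' = kb then ∑ j, (1 / 2 : ℝ) * BR i j else 0)
          + (if k' = kc then ∑ j, -(1 / 2 : ℝ) * BL i j else 0)) := by
      intro k'
      rw [Finset.sum_congr rfl (fun j _ => hsplit k' j), Finset.sum_add_distrib,
        Finset.sum_add_distrib]
      by_cases h1 : k' = k <;> by_cases h2 : k' = kb <;> by_cases h3 : k' = kc <;>
        simp [h1, h2, h3]
    rw [Finset.sum_congr rfl (fun k' _ => hinner k')]
    rw [Finset.sum_add_distrib, Finset.sum_add_distrib,
      Finset.sum_ite_eq' Finset.univ k, Finset.sum_ite_eq' Finset.univ kb,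
      Finset.sum_ite_eq' Finset.univ kc]
    simp only [Finset.mem_univ, if_true]
    rw [hT, hU, hV]
    have hne01 : (0 : ℕ) ≠ Np - 1 := by omega
    split_ifs <;> first | omega | ring1 | norm_num
end

section
/- Let m, n ∈ ℕ, let Q ∈ ℝ^{m×m} be skew-symmetric (Qᵀ = −Q) with zero row sums (Q·𝟙 = 0). Let v : {1,…,m} → ℝⁿ, ψ : {1,…,m} → ℝ, and let F : {1,…,m} × {1,…,m} → ℝⁿ satisfy the symmetry F(i,j) = F(j,i) and the entropy conservation condition ⟨v(i) − v(j), F(i,j)⟩ = ψ(i) − ψ(j) for all i, j. Then Σ_{i=1}^{m} Σ_{j=1}^{m} Q_{ij} ⟨v(i), F(i,j)⟩ = 0. -/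
open Matrix
open scoped RealInnerProductSpace

/-- The core flux-differencing identity: for a skew-symmetric matrix `Q` with zero
row sums and a symmetric entropy-conservative flux matrix `F`, the flux-differencing
entropy contribution vanishes. -/
theorem stmt1 (m n : ℕ) (Q : Matrix (Fin m) (Fin m) ℝ)
    (hskew : Qᵀ = -Q) (hrow : Q *ᵥ (fun _ => (1 : ℝ)) = 0)
    (v : Fin m → EuclideanSpace ℝ (Fin n))
    (ψ : Fin m → ℝ)
    (F : Fin m → Fin m → EuclideanSpace ℝ (Fin n))
    (hsymm : ∀ i j, F i j = F j i)
    (hEC : ∀ i j, ⟪v i - v j, F i j⟫ = ψ i - ψ j) :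
    ∑ i, ∑ j, Q i j * ⟪v i, F i j⟫ = 0 := by
  have hskew' : ∀ i j, Q j i = -Q i j := fun i j => by
    have := congrFun (congrFun hskew i) j
    simpa [Matrix.transpose_apply] using this
  have hrow' : ∀ i, ∑ j, Q i j = 0 := fun i => by
    have := congrFun hrow i
    simpa [Matrix.mulVec, dotProduct] using this
  have hcol : ∀ j, ∑ i, Q i j = 0 := fun j => by
    have : ∑ i, Q i j = -∑ i, Q j i := by
      rw [← Finset.sum_neg_distrib]
      exact Finset.sum_congr rfl fun i _ => by rw [hskew']
    rw [this, hrow', neg_zero]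
  set S := ∑ i, ∑ j, Q i j * ⟪v i, F i j⟫ with hS
  have key : ∀ i j, Q i j * ⟪v i, F i j⟫ + Q j i * ⟪v j, F j i⟫
      = Q i j * (ψ i - ψ j) := by
    intro i j
    rw [hskew' i j, hsymm j i, ← hEC i j, inner_sub_left]
    ring
  have hswap : S = ∑ i, ∑ j, Q j i * ⟪v j, F j i⟫ := by
    rw [hS, Finset.sum_comm]
  have h2 : S + S = ∑ i, ∑ j, Q i j * (ψ i - ψ j) := by
    nth_rewrite 2 [hswap]
    nth_rewrite 1 [hS]
    rw [← Finset.sum_add_distrib]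
    refine Finset.sum_congr rfl fun i _ => ?_
    rw [← Finset.sum_add_distrib]
    exact Finset.sum_congr rfl fun j _ => key i j
  have h3 : ∑ i, ∑ j, Q i j * (ψ i - ψ j) = 0 := by
    have : ∀ i j, Q i j * (ψ i - ψ j) = Q i j * ψ i - Q i j * ψ j := fun i j => by ring
    simp_rw [this, Finset.sum_sub_distrib]
    have hA : ∑ i, ∑ j, Q i j * ψ i = 0 :=
      Finset.sum_eq_zero fun i _ => by rw [← Finset.sum_mul, hrow', zero_mul]
    have hB : ∑ i, ∑ j, Q i j * ψ j = 0 := by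
      rw [Finset.sum_comm]
      exact Finset.sum_eq_zero fun j _ => by rw [← Finset.sum_mul, hcol, zero_mul]
    rw [hA, hB, sub_zero]
  linarith [h2, h3]
end

section
/- Let m, n ∈ ℕ, let M : {1,…,m} → ℝ with M(i) > 0 for all i, and let Q ∈ ℝ^{m×m} be skew-symmetric with zero row sums (Q·𝟙 = 0). Let S : ℝⁿ → ℝ be differentiable with gradient v(u) = ∇S(u), let ψ : ℝⁿ → ℝ, and let f_EC : ℝⁿ × ℝⁿ → ℝⁿ be an entropy conservative two-point flux for (v, ψ), i.e. f_EC(uL,uR) = f_EC(uR,uL) and ⟨v(uL) − v(uR), f_EC(uL,uR)⟩ = ψ(uL) − ψ(uR) for all uL, uR ∈ ℝⁿ. Suppose u : ℝ → ({1,…,m} → ℝⁿ) is differentiable and satisfies, for every i and t, the semi-discrete scheme M(i)·(d/dt)u_i(t) + 2 Σ_{j=1}^{m} Q_{ij} f_EC(u_i(t), u_j(t)) = 0. Then the total entropy t ↦ Σ_{i=1}^{m} M(i) S(u_i(t)) has zero derivative, i.e. is constant in time. -/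
open Matrix
open scoped RealInnerProductSpace

/-- Semi-discrete entropy conservation for the global entropy conservative DG
full order model on a 1D periodic domain. -/
theorem stmt2 (m n : ℕ)
    (M : Fin m → ℝ) (hM : ∀ i, 0 < M i)
    (Q : Matrix (Fin m) (Fin m) ℝ)
    (hskew : Qᵀ = -Q) (hrow : Q *ᵥ (fun _ => (1 : ℝ)) = 0)
    (S : EuclideanSpace ℝ (Fin n) → ℝ)
    (v : EuclideanSpace ℝ (Fin n) → EuclideanSpace ℝ (Fin n))
    (hS : ∀ x, HasGradientAt S (v x) x)
    (ψ : EuclideanSpace ℝ (Fin n) → ℝ)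
    (fEC : EuclideanSpace ℝ (Fin n) → EuclideanSpace ℝ (Fin n) → EuclideanSpace ℝ (Fin n))
    (hsymm : ∀ uL uR, fEC uL uR = fEC uR uL)
    (hEC : ∀ uL uR, ⟪v uL - v uR, fEC uL uR⟫ = ψ uL - ψ uR)
    (u u' : ℝ → Fin m → EuclideanSpace ℝ (Fin n))
    (hu : ∀ i t, HasDerivAt (fun s => u s i) (u' t i) t)
    (hscheme : ∀ i t,
      M i • u' t i + (2 : ℝ) • ∑ j, Q i j • fEC (u t i) (u t j) = 0) :
    ∀ t, HasDerivAt (fun s => ∑ i, M i * S (u s i)) 0 t := by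
  intro t
  have hQ : ∀ i j, Q j i = -Q i j := by
    intro i j
    have := congrFun (congrFun hskew i) j
    simpa [Matrix.transpose_apply, Matrix.neg_apply] using this
  have hrowsum : ∀ i, ∑ j, Q i j = 0 := by
    intro i
    have := congrFun hrow i
    simpa [Matrix.mulVec, dotProduct] using this
  have hcolsum : ∀ j, ∑ i, Q i j = 0 := by
    intro j
    have : ∑ i, Q i j = -∑ i, Q j i := by
      rw [← Finset.sum_neg_distrib]
      exact Finset.sum_congr rfl fun i _ => by rw [hQ]
    rw [this, hrowsum, neg_zero]
  set a : Fin m → EuclideanSpace ℝ (Fin n) := u t with ha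
  -- key algebraic identity
  have hswap : ∑ i, ∑ j, Q i j * ⟪v (a j), fEC (a i) (a j)⟫
      = -∑ i, ∑ j, Q i j * ⟪v (a i), fEC (a i) (a j)⟫ := by
    rw [Finset.sum_comm, ← Finset.sum_neg_distrib]
    refine Finset.sum_congr rfl fun j _ => ?_
    rw [← Finset.sum_neg_distrib]
    refine Finset.sum_congr rfl fun i _ => ?_
    rw [hQ i j, hsymm (a i) (a j)]
    ring
  have hT : ∑ i, ∑ j, Q i j * ⟪v (a i), fEC (a i) (a j)⟫ = 0 := by
    have h2 : (2:ℝ) * ∑ i, ∑ j, Q i j * ⟪v (a i), fEC (a i) (a j)⟫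
        = ∑ i, ∑ j, Q i j * (ψ (a i) - ψ (a j)) := by
      have : (2:ℝ) * ∑ i, ∑ j, Q i j * ⟪v (a i), fEC (a i) (a j)⟫
          = (∑ i, ∑ j, Q i j * ⟪v (a i), fEC (a i) (a j)⟫)
            - ∑ i, ∑ j, Q i j * ⟪v (a j), fEC (a i) (a j)⟫ := by
        rw [hswap]; ring
      rw [this, ← Finset.sum_sub_distrib]
      refine Finset.sum_congr rfl fun i _ => ?_
      rw [← Finset.sum_sub_distrib]
      refine Finset.sum_congr rfl fun j _ => ?_
      rw [← hEC (a i) (a j), inner_sub_left]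
      ring
    have hz : ∑ i, ∑ j, Q i j * (ψ (a i) - ψ (a j)) = 0 := by
      have e1 : ∀ i : Fin m, ∑ j, Q i j * ψ (a i) = 0 := fun i => by
        rw [← Finset.sum_mul, hrowsum, zero_mul]
      have e2 : ∀ j : Fin m, ∑ i, Q i j * ψ (a j) = 0 := fun j => by
        rw [← Finset.sum_mul, hcolsum, zero_mul]
      simp only [mul_sub, Finset.sum_sub_distrib]
      rw [Finset.sum_congr rfl (fun i _ => e1 i),
        Finset.sum_comm (f := fun i j => Q i j * ψ (a j)),
        Finset.sum_congr rfl (fun j _ => e2 j)]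
      simp
    have := h2.trans hz
    linarith
  -- derivative of each summand
  have hderiv : ∀ i, HasDerivAt (fun s => M i * S (u s i))
      (M i * ⟪v (a i), u' t i⟫) t := by
    intro i
    have h1 : HasDerivAt (fun s => S (u s i)) (⟪v (a i), u' t i⟫) t := by
      have h2 := (hS (u t i)).hasFDerivAt.comp_hasDerivAt t (hu i t)
      simp [InnerProductSpace.toDual_apply_apply, ha] at h2
      exact h2
    simpa using h1.const_mul (M i)
  have hsum := HasDerivAt.fun_sum (fun i (_ : i ∈ Finset.univ) => hderiv i)
  have hz : ∑ i, M i * ⟪v (a i), u' t i⟫ = 0 := by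
    have hterm : ∀ i, M i * ⟪v (a i), u' t i⟫
        = -(2 * ∑ j, Q i j * ⟪v (a i), fEC (a i) (a j)⟫) := by
      intro i
      have hs : M i • u' t i = -((2:ℝ) • ∑ j, Q i j • fEC (u t i) (u t j)) :=
        eq_neg_of_add_eq_zero_left (hscheme i t)
      have : ⟪v (a i), M i • u' t i⟫
          = ⟪v (a i), -((2:ℝ) • ∑ j, Q i j • fEC (a i) (a j))⟫ := by
        rw [hs]
      rw [real_inner_smul_right] at this
      rw [this, inner_neg_right, real_inner_smul_right, inner_sum]
      simp only [real_inner_smul_right]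
    rw [Finset.sum_congr rfl fun i _ => hterm i, Finset.sum_neg_distrib,
      ← Finset.mul_sum, hT, mul_zero, neg_zero]
  rw [hz] at hsum
  exact hsum
end

section
/- Let M ∈ ℝ^{m×m} be diagonal with positive diagonal entries (hence invertible), let V_t ∈ ℝ^{m×r} be such that V_tᵀ M V_t is invertible, and define P_t = (V_tᵀ M V_t)⁻¹ V_tᵀ M. Let V_N ∈ ℝ^{m×N} and Q ∈ ℝ^{m×m}. Assume that the column space of V_N is contained in the column space of V_t, and that the column space of M⁻¹ Qᵀ V_N is contained in the column space of V_t. Then V_Nᵀ ( Q − P_tᵀ V_tᵀ Q V_t P_t ) = 0; that is, the error between Q and the compressed operator P_tᵀ V_tᵀ Q V_t P_t is orthogonal to the reduced basis V_N. -/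
open Matrix

/-- Accuracy of ideal hyper-reduction with the new test basis enrichment
`M⁻¹ Qᵀ V_N`: the error between `Q` and the compressed operator is orthogonal
to the reduced basis `V_N` (Theorem `thm: DG_1D_HR_testbasis`). -/
theorem stmt6 (m r N : ℕ)
    (d : Fin m → ℝ) (hd : ∀ i, 0 < d i)
    (Vt : Matrix (Fin m) (Fin r) ℝ)
    (hinv : IsUnit (Vtᵀ * Matrix.diagonal d * Vt))
    (Pt : Matrix (Fin r) (Fin m) ℝ)
    (hPt : Pt = (Vtᵀ * Matrix.diagonal d * Vt)⁻¹ * Vtᵀ * Matrix.diagonal d)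
    (VN : Matrix (Fin m) (Fin N) ℝ)
    (Q : Matrix (Fin m) (Fin m) ℝ)
    (h1 : ∃ C : Matrix (Fin r) (Fin N) ℝ, VN = Vt * C)
    (h2 : ∃ C : Matrix (Fin r) (Fin N) ℝ,
      (Matrix.diagonal d)⁻¹ * Qᵀ * VN = Vt * C) :
    VNᵀ * (Q - Ptᵀ * Vtᵀ * Q * Vt * Pt) = 0 := by
  obtain ⟨C1, hC1⟩ := h1
  obtain ⟨C2, hC2⟩ := h2
  set M := Matrix.diagonal d with hM
  set A := Vtᵀ * M * Vt with hA
  have hdet : IsUnit A.det := (Matrix.isUnit_iff_isUnit_det _).mp hinv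
  have hAinv : A⁻¹ * A = 1 := Matrix.nonsing_inv_mul _ hdet
  have hAinv' : A * A⁻¹ = 1 := Matrix.mul_nonsing_inv _ hdet
  have hMdet : IsUnit M.det := by
    rw [hM, Matrix.det_diagonal]
    exact isUnit_iff_ne_zero.mpr (Finset.prod_ne_zero_iff.mpr fun i _ => (hd i).ne')
  have hMM : M * M⁻¹ = 1 := Matrix.mul_nonsing_inv _ hMdet
  have hMT : Mᵀ = M := Matrix.diagonal_transpose d
  have hA2 : Vtᵀ * (M * Vt) = A := by rw [hA, Matrix.mul_assoc]
  have hPtVt : Pt * Vt = 1 := by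
    rw [hPt, Matrix.mul_assoc, Matrix.mul_assoc, hA2, hAinv]
  -- Qᵀ * VN = M * (Vt * C2)
  have hQVN : Qᵀ * VN = M * (Vt * C2) := by
    have := congrArg (fun X => M * X) hC2
    simpa [Matrix.mul_assoc, hMM, ← Matrix.mul_assoc, Matrix.one_mul] using this
  -- VNᵀ * Q = C2ᵀ * Vtᵀ * M
  have hVNQ : VNᵀ * Q = C2ᵀ * Vtᵀ * M := by
    have := congrArg Matrix.transpose hQVN
    simpa [Matrix.transpose_mul, hMT, Matrix.mul_assoc] using this
  have hPtVN : Pt * VN = C1 := by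
    rw [hC1, ← Matrix.mul_assoc, hPtVt, Matrix.one_mul]
  have hVNPt : VNᵀ * Ptᵀ = C1ᵀ := by
    rw [← Matrix.transpose_mul, hPtVN]
  have key : VNᵀ * Q * Vt * Pt = VNᵀ * Q := by
    rw [hVNQ, hPt]
    calc C2ᵀ * Vtᵀ * M * Vt * ((Vtᵀ * M * Vt)⁻¹ * Vtᵀ * M)
        = C2ᵀ * ((Vtᵀ * M * Vt) * (Vtᵀ * M * Vt)⁻¹) * (Vtᵀ * M) := by
          simp only [Matrix.mul_assoc]
      _ = C2ᵀ * Vtᵀ * M := by rw [← hA, hAinv', Matrix.mul_one, Matrix.mul_assoc]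
  have hVNT : VNᵀ = C1ᵀ * Vtᵀ := by rw [hC1, Matrix.transpose_mul]
  have : VNᵀ * (Ptᵀ * Vtᵀ * Q * Vt * Pt) = VNᵀ * Q := by
    calc VNᵀ * (Ptᵀ * Vtᵀ * Q * Vt * Pt)
        = (VNᵀ * Ptᵀ) * Vtᵀ * Q * Vt * Pt := by simp only [Matrix.mul_assoc]
      _ = C1ᵀ * Vtᵀ * Q * Vt * Pt := by rw [hVNPt]
      _ = VNᵀ * Q * Vt * Pt := by rw [← hVNT]
      _ = VNᵀ * Q := key
  rw [Matrix.mul_sub, this, sub_self]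
end

section
/- Let Q ∈ ℝ^{m×m} be skew-symmetric with zero row sums (Q·𝟙_m = 0) and let V_t ∈ ℝ^{m×r}. Let ι : {1,…,s} → {1,…,m} be an index selection and let V̄_t ∈ ℝ^{s×r} be the matrix of rows of V_t at the indices ι. Let W ∈ ℝ^{s×s} be diagonal with positive entries such that V̄_tᵀ W V̄_t is invertible, and define P_t = (V̄_tᵀ W V̄_t)⁻¹ V̄_tᵀ W ∈ ℝ^{r×s}. Assume the all-ones vector lies in the range of V_t, i.e. there exists c ∈ ℝ^{r} with V_t c = 𝟙_m. Then the hyper-reduced operator Q̄ = P_tᵀ (V_tᵀ Q V_t) P_t ∈ ℝ^{s×s} is skew-symmetric and has zero row sums: Q̄ + Q̄ᵀ = 0 and Q̄·𝟙_s = 0. -/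
open Matrix

/-- The hyper-reduced nodal differentiation matrix `Q̄ = P_tᵀ (V_tᵀ Q V_t) P_t`
is skew-symmetric and has zero row sums, provided `Q` is skew-symmetric with
zero row sums and the all-ones vector lies in the range of the test basis. -/
theorem stmt7 (m r s : ℕ)
    (Q : Matrix (Fin m) (Fin m) ℝ)
    (hskew : Qᵀ = -Q) (hrow : Q *ᵥ (fun _ => (1 : ℝ)) = 0)
    (Vt : Matrix (Fin m) (Fin r) ℝ)
    (ι : Fin s → Fin m)
    (Vtbar : Matrix (Fin s) (Fin r) ℝ) (hVtbar : Vtbar = Vt.submatrix ι id)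
    (w : Fin s → ℝ) (hw : ∀ i, 0 < w i)
    (hinv : IsUnit (Vtbarᵀ * Matrix.diagonal w * Vtbar))
    (Pt : Matrix (Fin r) (Fin s) ℝ)
    (hPt : Pt = (Vtbarᵀ * Matrix.diagonal w * Vtbar)⁻¹ * Vtbarᵀ * Matrix.diagonal w)
    (hone : ∃ c : Fin r → ℝ, Vt *ᵥ c = fun _ => (1 : ℝ))
    (Qbar : Matrix (Fin s) (Fin s) ℝ)
    (hQbar : Qbar = Ptᵀ * (Vtᵀ * Q * Vt) * Pt) :
    Qbar + Qbarᵀ = 0 ∧ Qbar *ᵥ (fun _ => (1 : ℝ)) = 0 := by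
  constructor
  · have h : Qbarᵀ = -Qbar := by
      rw [hQbar]
      simp only [transpose_mul, transpose_transpose, hskew, Matrix.mul_neg,
        Matrix.neg_mul, Matrix.mul_assoc]
    rw [h]; exact add_neg_cancel _
  · obtain ⟨c, hc⟩ := hone
    have hbar : Vtbar *ᵥ c = fun _ => (1 : ℝ) := by
      funext i
      rw [hVtbar]
      have := congrFun hc (ι i)
      simpa [Matrix.mulVec, dotProduct, Matrix.submatrix] using this
    have hPtV : Pt * Vtbar = 1 := by
      rw [hPt, Matrix.mul_assoc, Matrix.mul_assoc, ← Matrix.mul_assoc Vtbarᵀ]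
      exact Matrix.nonsing_inv_mul _ ((Matrix.isUnit_iff_isUnit_det _).mp hinv)
    have hPt1 : Pt *ᵥ (fun _ => (1 : ℝ)) = c := by
      rw [← hbar, Matrix.mulVec_mulVec, hPtV, Matrix.one_mulVec]
    rw [hQbar, ← Matrix.mulVec_mulVec, hPt1, ← Matrix.mulVec_mulVec,
      ← Matrix.mulVec_mulVec, hc, ← Matrix.mulVec_mulVec, hrow]
    simp
end

section
/- Let Q ∈ ℝ^{m×m}, V_t ∈ ℝ^{m×r}, let R ∈ ℝ^{b×m} be a boundary-extraction matrix each of whose rows is a standard basis vector of ℝ^m, and let B_b ∈ ℝ^{b×b} be diagonal. Suppose Q satisfies the summation-by-parts property Q + Qᵀ = Rᵀ B_b R. Let P_t ∈ ℝ^{r×s} be any matrix, define Q̄ = P_tᵀ (V_tᵀ Q V_t) P_t ∈ ℝ^{s×s}, V_bt = R V_t ∈ ℝ^{b×r}, and E = V_bt P_t ∈ ℝ^{b×s}. Then Q̄ satisfies the generalized summation-by-parts property Q̄ + Q̄ᵀ = Eᵀ B_b E. -/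
open Matrix

/-- The hyper-reduced operator `Q̄ = P_tᵀ (V_tᵀ Q V_t) P_t` satisfies the
generalized summation-by-parts property `Q̄ + Q̄ᵀ = Eᵀ B_b E`. -/
theorem stmt8 (m r b s : ℕ)
    (Q : Matrix (Fin m) (Fin m) ℝ)
    (Vt : Matrix (Fin m) (Fin r) ℝ)
    (R : Matrix (Fin b) (Fin m) ℝ)
    (hR : ∀ i : Fin b, ∃ j : Fin m, R i = Pi.single j 1)
    (Bb : Matrix (Fin b) (Fin b) ℝ) (hBb : Bb.IsDiag)
    (hSBP : Q + Qᵀ = Rᵀ * Bb * R)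
    (Pt : Matrix (Fin r) (Fin s) ℝ)
    (Qbar : Matrix (Fin s) (Fin s) ℝ)
    (hQbar : Qbar = Ptᵀ * (Vtᵀ * Q * Vt) * Pt)
    (Vbt : Matrix (Fin b) (Fin r) ℝ) (hVbt : Vbt = R * Vt)
    (E : Matrix (Fin b) (Fin s) ℝ) (hE : E = Vbt * Pt) :
    Qbar + Qbarᵀ = Eᵀ * Bb * E := by
  subst hQbar hVbt hE
  have h : Q + Qᵀ = Rᵀ * Bb * R := hSBP
  simp only [Matrix.transpose_mul, Matrix.transpose_transpose, Matrix.mul_assoc]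
  rw [← Matrix.mul_add, ← Matrix.mul_add, ← Matrix.add_mul, h]
  simp only [Matrix.mul_assoc]
end

section
/- Let Q̄ ∈ ℝ^{s×s}, E ∈ ℝ^{b×s}, and let B_b ∈ ℝ^{b×b} be diagonal. Define the hybridized operator Q̄_h ∈ ℝ^{(s+b)×(s+b)} as the block matrix Q̄_h = ½ [ [Q̄ − Q̄ᵀ, Eᵀ B_b], [−B_b E, B_b] ]. Then: (i) Q̄_h satisfies the block summation-by-parts property Q̄_h + Q̄_hᵀ = B_h, where B_h is the block-diagonal matrix with blocks 0 ∈ ℝ^{s×s} and B_b; and (ii) if additionally Q̄·𝟙_s = 0, Q̄ + Q̄ᵀ = Eᵀ B_b E, and E·𝟙_s = 𝟙_b, then Q̄_h has zero row sums: Q̄_h·𝟙_{s+b} = 0. -/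
open Matrix

/-- The hybridized SBP operator `Q̄_h` satisfies the block SBP property, and has
zero row sums when `Q̄𝟙 = 0`, `Q̄ + Q̄ᵀ = Eᵀ B_b E` and `E𝟙 = 𝟙`. -/
theorem stmt9 (s b : ℕ)
    (Qbar : Matrix (Fin s) (Fin s) ℝ)
    (E : Matrix (Fin b) (Fin s) ℝ)
    (β : Fin b → ℝ)
    (Qh : Matrix (Fin s ⊕ Fin b) (Fin s ⊕ Fin b) ℝ)
    (hQh : Qh = (1 / 2 : ℝ) • Matrix.fromBlocks
      (Qbar - Qbarᵀ) (Eᵀ * Matrix.diagonal β)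
      (-(Matrix.diagonal β * E)) (Matrix.diagonal β)) :
    (Qh + Qhᵀ = Matrix.fromBlocks 0 0 0 (Matrix.diagonal β)) ∧
    ((Qbar *ᵥ (fun _ => (1 : ℝ)) = 0 ∧
      Qbar + Qbarᵀ = Eᵀ * Matrix.diagonal β * E ∧
      E *ᵥ (fun _ => (1 : ℝ)) = fun _ => (1 : ℝ)) →
      Qh *ᵥ (fun _ => (1 : ℝ)) = 0) := by
  subst hQh
  have hd : (Matrix.diagonal β) *ᵥ (fun _ => (1 : ℝ)) = β := by
    funext i
    simp [Matrix.mulVec_diagonal]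
  constructor
  · ext i j
    rcases i with i | i <;> rcases j with j | j <;>
      simp [Matrix.add_apply, Matrix.transpose_apply, Matrix.mul_apply,
        Matrix.diagonal_apply]
    all_goals try ring
    rcases eq_or_ne i j with h | h
    · subst h; simp; ring
    · simp [h, Ne.symm h]
  · rintro ⟨h1, h2, h3⟩
    have h2' : Qbarᵀ *ᵥ (fun _ => (1 : ℝ)) = Eᵀ *ᵥ β := by
      have h := congrArg (· *ᵥ (fun _ => (1 : ℝ))) h2
      simp only [Matrix.add_mulVec, h1, zero_add] at h
      rw [h, ← Matrix.mulVec_mulVec, ← Matrix.mulVec_mulVec, h3, hd]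
    have hone : (fun _ => (1 : ℝ) : Fin s ⊕ Fin b → ℝ)
        = Sum.elim (fun _ => (1 : ℝ)) (fun _ => (1 : ℝ)) := by
      funext x; cases x <;> rfl
    rw [hone, Matrix.smul_mulVec, Matrix.fromBlocks_mulVec]
    simp only [Sum.elim_comp_inl, Sum.elim_comp_inr]
    rw [Matrix.sub_mulVec, h1, h2', ← Matrix.mulVec_mulVec, hd,
      Matrix.neg_mulVec, ← Matrix.mulVec_mulVec, h3, hd]
    simp
end

section
/- Let n, N, s, b ∈ ℕ. Let W ∈ ℝ^{s×s} be diagonal with positive diagonal entries, let V̄_N ∈ ℝ^{s×N} with V̄_Nᵀ W V̄_N invertible, let V_b ∈ ℝ^{b×N}, and let V̄_h ∈ ℝ^{(s+b)×N} be the vertical concatenation of V̄_N and V_b. Let Q̄ ∈ ℝ^{s×s}, E ∈ ℝ^{b×s}, and B_b ∈ ℝ^{b×b} diagonal satisfy Q̄·𝟙_s = 0, Q̄ + Q̄ᵀ = Eᵀ B_b E, and E·𝟙_s = 𝟙_b, and define the hybridized operator Q̄_h = ½ [ [Q̄ − Q̄ᵀ, Eᵀ B_b], [−B_b E, B_b]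 ]. Let S : ℝⁿ → ℝ be differentiable with gradient v = ∇S, assume v is a bijection of ℝⁿ with inverse u_v, let ψ : ℝⁿ → ℝ, and let f_EC be an entropy conservative two-point flux for (v, ψ). Let u_N : ℝ → ({1,…,N} → ℝⁿ) be differentiable, let f*_b : ℝ → ({1,…,b} → ℝⁿ) be given boundary flux data, and for each t define v_N(t) = (V̄_Nᵀ W V̄_N)⁻¹ V̄_Nᵀ W v(V̄_N u_N(t)), ṽ(t) = V̄_h v_N(t) ∈ (ℝⁿ)^{s+b} with boundary part ṽ_b(t) = V_b v_N(t), ũ(t) = u_v(ṽ(t)) applied componentwise with boundary part ũ_b(t) = u_v(ṽ_b(t)), and F_{ij}(t) = f_EC(ũ_i(t), ũ_j(t)) for i,j ∈ {1,…,s+b}. If u_N satisfies (V̄_Nᵀ W V̄_N)·(d/dt)u_N(t) + V̄_hᵀ( ((Q̄_h − Q̄_hᵀ) ∘ F(t))·𝟙 ) + V_bᵀ B_b f*_b(t) = 0, then for all t, (d/dt) Σ_{i=1}^{s} W_{ii} S( (V̄_N u_N(t))_i ) − Σ_{j=1}^{b} (B_b)_{jj} ( ψ(ũ_{b,j}(t))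 − ⟨ṽ_{b,j}(t), f*_{b,j}(t)⟩ ) = 0. -/
open Matrix
open scoped RealInnerProductSpace

/-- Action of a real matrix on a vector whose entries lie in a real vector space
(the "vector-of-vectors" matrix-vector product). -/
noncomputable def mulVecE {m' n' : Type*} [Fintype n'] {E : Type*}
    [AddCommMonoid E] [Module ℝ E] (A : Matrix m' n' ℝ) (x : n' → E) : m' → E :=
  fun i => ∑ j, A i j • x j

section helpers
set_option linter.unusedSectionVars false
variable {m' n' p' : Type*} [Fintype m'] [Fintype n'] [Fintype p']
variable {F : Type*} [NormedAddCommGroup F] [InnerProductSpace ℝ F]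

lemma mulVecE_mulVecE (A : Matrix m' n' ℝ) (B : Matrix n' p' ℝ) (x : p' → F) :
    mulVecE (A * B) x = mulVecE A (mulVecE B x) := by
  funext i
  simp only [mulVecE, Matrix.mul_apply, Finset.sum_smul, Finset.smul_sum]
  rw [Finset.sum_comm]
  simp [smul_smul]

lemma mulVecE_one [DecidableEq n'] (x : n' → F) : mulVecE (1 : Matrix n' n' ℝ) x = x := by
  funext i; simp [mulVecE, Matrix.one_apply, ite_smul]

lemma mulVecE_diagonal [DecidableEq n'] (w : n' → ℝ) (x : n' → F) :
    mulVecE (Matrix.diagonal w) x = fun i => w i • x i := by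
  funext i; simp [mulVecE, Matrix.diagonal_apply, ite_smul]

lemma sum_inner_mulVecE (A : Matrix m' n' ℝ) (x : n' → F) (y : m' → F) :
    ∑ i, ⟪mulVecE A x i, y i⟫ = ∑ j, ⟪x j, mulVecE Aᵀ y j⟫ := by
  simp only [mulVecE, sum_inner, inner_sum, real_inner_smul_left, real_inner_smul_right,
    Matrix.transpose_apply]
  exact Finset.sum_comm

lemma sum_antisymm_symm {ι : Type*} [Fintype ι] (a c : ι → ι → ℝ)
    (ha : ∀ i j, a j i = -a i j) (hc : ∀ i j, c j i = c i j) :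
    ∑ i, ∑ j, a i j * c i j = 0 := by
  have h : ∑ i, ∑ j, a i j * c i j = -∑ i, ∑ j, a i j * c i j := by
    conv_lhs => rw [Finset.sum_comm]
    calc ∑ j, ∑ i, a i j * c i j = ∑ j, ∑ i, -(a j i * c j i) := by
          refine Finset.sum_congr rfl fun j _ => Finset.sum_congr rfl fun i _ => ?_
          rw [ha j i, hc j i]; ring
      _ = -∑ j, ∑ i, a j i * c j i := by simp [Finset.sum_neg_distrib]
  linarith
end helpers


/-- Semi-discrete entropy balance for the hyper-reduced entropy conservative ROM
with weakly imposed boundary conditions (Theorem `thm:weakBC_stability`). -/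
theorem stmt11 (n N s b : ℕ)
    (W : Fin s → ℝ) (hW : ∀ i, 0 < W i)
    (VN : Matrix (Fin s) (Fin N) ℝ)
    (hMN : IsUnit (VNᵀ * Matrix.diagonal W * VN))
    (Vb : Matrix (Fin b) (Fin N) ℝ)
    (Vh : Matrix (Fin s ⊕ Fin b) (Fin N) ℝ)
    (hVh : Vh = Matrix.fromRows VN Vb)
    (Qbar : Matrix (Fin s) (Fin s) ℝ)
    (E : Matrix (Fin b) (Fin s) ℝ)
    (β : Fin b → ℝ)
    (hQ1 : Qbar *ᵥ (fun _ => (1 : ℝ)) = 0)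
    (hSBP : Qbar + Qbarᵀ = Eᵀ * Matrix.diagonal β * E)
    (hE1 : E *ᵥ (fun _ => (1 : ℝ)) = fun _ => (1 : ℝ))
    (Qh : Matrix (Fin s ⊕ Fin b) (Fin s ⊕ Fin b) ℝ)
    (hQh : Qh = (1 / 2 : ℝ) • Matrix.fromBlocks
      (Qbar - Qbarᵀ) (Eᵀ * Matrix.diagonal β)
      (-(Matrix.diagonal β * E)) (Matrix.diagonal β))
    (S : EuclideanSpace ℝ (Fin n) → ℝ)
    (v uv : EuclideanSpace ℝ (Fin n) → EuclideanSpace ℝ (Fin n))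
    (hS : ∀ x, HasGradientAt S (v x) x)
    (hleft : Function.LeftInverse uv v) (hright : Function.RightInverse uv v)
    (ψ : EuclideanSpace ℝ (Fin n) → ℝ)
    (fEC : EuclideanSpace ℝ (Fin n) → EuclideanSpace ℝ (Fin n) → EuclideanSpace ℝ (Fin n))
    (hsymm : ∀ uL uR, fEC uL uR = fEC uR uL)
    (hEC : ∀ uL uR, ⟪v uL - v uR, fEC uL uR⟫ = ψ uL - ψ uR)
    (uN uN' : ℝ → Fin N → EuclideanSpace ℝ (Fin n))
    (huN : ∀ k t, HasDerivAt (fun τ => uN τ k) (uN' t k) t)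
    (fb : ℝ → Fin b → EuclideanSpace ℝ (Fin n))
    -- projected entropy variable coefficients
    (vN : ℝ → Fin N → EuclideanSpace ℝ (Fin n))
    (hvN : ∀ t, vN t =
      mulVecE ((VNᵀ * Matrix.diagonal W * VN)⁻¹ * VNᵀ * Matrix.diagonal W)
        (fun i => v (mulVecE VN (uN t) i)))
    -- entropy-projected entropy variables and states
    (vtil : ℝ → (Fin s ⊕ Fin b) → EuclideanSpace ℝ (Fin n))
    (hvtil : ∀ t, vtil t = mulVecE Vh (vN t))
    (vtilb : ℝ → Fin b → EuclideanSpace ℝ (Fin n))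
    (hvtilb : ∀ t, vtilb t = mulVecE Vb (vN t))
    (util : ℝ → (Fin s ⊕ Fin b) → EuclideanSpace ℝ (Fin n))
    (hutil : ∀ t i, util t i = uv (vtil t i))
    (utilb : ℝ → Fin b → EuclideanSpace ℝ (Fin n))
    (hutilb : ∀ t j, utilb t j = uv (vtilb t j))
    -- flux matrix
    (F : ℝ → (Fin s ⊕ Fin b) → (Fin s ⊕ Fin b) → EuclideanSpace ℝ (Fin n))
    (hF : ∀ t i j, F t i j = fEC (util t i) (util t j))
    -- the hyper-reduced ROM with weakly imposed boundary conditions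
    (hODE : ∀ t k,
      mulVecE (VNᵀ * Matrix.diagonal W * VN) (uN' t) k
        + mulVecE Vhᵀ (fun i => ∑ j, (Qh - Qhᵀ) i j • F t i j) k
        + mulVecE Vbᵀ (fun j => β j • fb t j) k = 0) :
    ∀ t, HasDerivAt (fun τ => ∑ i, W i * S (mulVecE VN (uN τ) i))
      (∑ j, β j * (ψ (utilb t j) - ⟪vtilb t j, fb t j⟫)) t := by
  intro t
  set x : Fin s → EuclideanSpace ℝ (Fin n) := fun i => mulVecE VN (uN t) i with hx
  -- derivative of each node curve
  have hc : ∀ i, HasDerivAt (fun τ => mulVecE VN (uN τ) i) (mulVecE VN (uN' t) i) t := by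
    intro i
    exact HasDerivAt.fun_sum fun k _ => (huN k t).const_smul (VN i k)
  have hSd : ∀ i, HasDerivAt (fun τ => S (mulVecE VN (uN τ) i))
      ⟪v (x i), mulVecE VN (uN' t) i⟫ t := by
    intro i
    have h := (hS (x i)).hasFDerivAt.comp_hasDerivAt t (hc i)
    simpa [Function.comp_def] using h
  have hD : HasDerivAt (fun τ => ∑ i, W i * S (mulVecE VN (uN τ) i))
      (∑ i, W i * ⟪v (x i), mulVecE VN (uN' t) i⟫) t :=
    HasDerivAt.fun_sum fun i _ => (hSd i).const_mul (W i)
  suffices hkey : (∑ i, W i * ⟪v (x i), mulVecE VN (uN' t) i⟫)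
      = ∑ j, β j * (ψ (utilb t j) - ⟪vtilb t j, fb t j⟫) by
    rw [← hkey]; exact hD
  -- scalar algebra
  set M := VNᵀ * Matrix.diagonal W * VN with hM
  set S' := Qh - Qhᵀ with hS'
  have hMinv : M * M⁻¹ = 1 := Matrix.mul_nonsing_inv _ ((Matrix.isUnit_iff_isUnit_det _).mp hMN)
  have hMsymm : Mᵀ = M := by
    simp [hM, Matrix.transpose_mul, Matrix.diagonal_transpose, Matrix.mul_assoc]
  have hproj : mulVecE (VNᵀ * Matrix.diagonal W) (fun i => v (x i)) = mulVecE M (vN t) := by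
    rw [hvN t, ← mulVecE_mulVecE]
    congr 1
    rw [← Matrix.mul_assoc, ← Matrix.mul_assoc, hMinv, Matrix.one_mul]
  have hproj2 : mulVecE VNᵀ (fun i => W i • v (x i)) = mulVecE M (vN t) := by
    rw [← hproj, mulVecE_mulVecE, mulVecE_diagonal]
  have step1 : (∑ i, W i * ⟪v (x i), mulVecE VN (uN' t) i⟫)
      = ∑ k, ⟪vN t k, mulVecE M (uN' t) k⟫ := by
    have e1 : (∑ i, W i * ⟪v (x i), mulVecE VN (uN' t) i⟫)
        = ∑ i, ⟪mulVecE VN (uN' t) i, W i • v (x i)⟫ := by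
      refine Finset.sum_congr rfl fun i _ => ?_
      rw [real_inner_smul_right, real_inner_comm]
    have e2 := sum_inner_mulVecE VN (uN' t) (fun i => W i • v (x i))
    have e3 := sum_inner_mulVecE M (vN t) (uN' t)
    rw [hMsymm] at e3
    rw [e1, e2]
    calc ∑ j, ⟪uN' t j, mulVecE VNᵀ (fun i => W i • v (x i)) j⟫
        = ∑ j, ⟪mulVecE M (vN t) j, uN' t j⟫ := by
          rw [hproj2]; exact Finset.sum_congr rfl fun j _ => real_inner_comm _ _
      _ = ∑ k, ⟪vN t k, mulVecE M (uN' t) k⟫ := e3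
  have hODE' : ∀ k, mulVecE M (uN' t) k
      = -(mulVecE Vhᵀ (fun i => ∑ j, S' i j • F t i j) k
          + mulVecE Vbᵀ (fun j => β j • fb t j) k) := by
    intro k
    have h := hODE t k
    rw [add_assoc] at h
    exact eq_neg_of_add_eq_zero_left h
  have step2 : (∑ k, ⟪vN t k, mulVecE M (uN' t) k⟫)
      = -(∑ i, ⟪vtil t i, ∑ j, S' i j • F t i j⟫)
        - ∑ j, ⟪vtilb t j, β j • fb t j⟫ := by
    have e4 := (sum_inner_mulVecE Vh (vN t) (fun i => ∑ j, S' i j • F t i j)).symm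
    have e5 := (sum_inner_mulVecE Vb (vN t) (fun j => β j • fb t j)).symm
    simp only [hODE', inner_neg_right, inner_add_right]
    rw [Finset.sum_neg_distrib, Finset.sum_add_distrib, e4, e5, hvtil, hvtilb]
    ring
  -- row sums of S'
  have hQT1 : Qbarᵀ *ᵥ (fun _ => (1:ℝ)) = Eᵀ *ᵥ (Matrix.diagonal β *ᵥ (fun _ => 1)) := by
    have h := congrArg (fun (A : Matrix (Fin s) (Fin s) ℝ) => A *ᵥ (fun _ => (1:ℝ))) hSBP
    simp only [Matrix.add_mulVec, hQ1, zero_add] at h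
    rw [h, ← Matrix.mulVec_mulVec, ← Matrix.mulVec_mulVec, hE1]
  have hone : (fun _ => (1:ℝ) : (Fin s ⊕ Fin b) → ℝ) = Sum.elim (fun _ => 1) (fun _ => 1) := by
    funext i; cases i <;> rfl
  have hS1 : S' *ᵥ (fun _ => (1:ℝ)) = Sum.elim (fun _ => (0:ℝ)) (fun j => -β j) := by
    funext i
    rw [hS', Matrix.sub_mulVec, hQh, Matrix.transpose_smul, Matrix.fromBlocks_transpose]
    rw [Matrix.smul_mulVec, Matrix.smul_mulVec, hone,
      Matrix.fromBlocks_mulVec, Matrix.fromBlocks_mulVec]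
    cases i with
    | inl a =>
      simp only [Pi.sub_apply, Pi.smul_apply, Sum.elim_inl, Pi.add_apply,
        Matrix.sub_mulVec, Matrix.transpose_sub, Matrix.transpose_transpose,
        Matrix.transpose_neg, Matrix.transpose_mul, Matrix.diagonal_transpose,
        Matrix.neg_mulVec, Function.comp_def, ← Matrix.mulVec_mulVec, hQ1, hQT1, hE1]
      simp
    | inr j =>
      simp only [Pi.sub_apply, Pi.smul_apply, Sum.elim_inr, Pi.add_apply,
        Matrix.sub_mulVec, Matrix.transpose_sub, Matrix.transpose_transpose,
        Matrix.transpose_neg, Matrix.transpose_mul, Matrix.diagonal_transpose,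
        Matrix.neg_mulVec, Function.comp_def, ← Matrix.mulVec_mulVec, hQ1, hQT1, hE1]
      simp only [Sum.elim_inl, Sum.elim_inr, hE1, Matrix.mulVec_diagonal, Pi.neg_apply,
        smul_eq_mul, Sum.map_inl]
      ring
  have hrow : ∀ i, (∑ j, S' i j) = Sum.elim (fun _ => (0:ℝ)) (fun j => -β j) i := by
    intro i
    rw [← hS1]
    simp [Matrix.mulVec, dotProduct]
  -- entropy conservation step
  have hvv : ∀ i, vtil t i = v (util t i) := fun i => by rw [hutil]; exact (hright _).symm
  have hFs : ∀ i j, F t j i = F t i j := fun i j => by rw [hF, hF, hsymm]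
  have hSa : ∀ i j, S' j i = -(S' i j) := by
    intro i j
    simp only [hS', Matrix.sub_apply, Matrix.transpose_apply]
    ring
  have hub : ∀ j, util t (Sum.inr j) = utilb t j := by
    intro j
    rw [hutil, hutilb, hvtil, hvtilb]
    congr 1
    simp [mulVecE, hVh]
  have hT : (∑ i, ⟪vtil t i, ∑ j, S' i j • F t i j⟫)
      = -∑ j, β j * ψ (utilb t j) := by
    have h0 : ∑ i, ∑ j, S' i j * (⟪v (util t i), F t i j⟫ - ψ (util t i)) = 0 := by
      refine sum_antisymm_symm _ _ hSa ?_
      intro i j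
      have h := hEC (util t i) (util t j)
      rw [← hF t i j, inner_sub_left] at h
      have hji : F t j i = F t i j := hFs i j
      rw [hji]
      linarith
    have e6 : (∑ i, ⟪vtil t i, ∑ j, S' i j • F t i j⟫)
        = ∑ i, ∑ j, S' i j * ⟪v (util t i), F t i j⟫ := by
      refine Finset.sum_congr rfl fun i _ => ?_
      rw [hvv i, inner_sum]
      exact Finset.sum_congr rfl fun j _ => real_inner_smul_right _ _ _
    have e7 : (∑ i, ∑ j, S' i j * ⟪v (util t i), F t i j⟫)
        = ∑ i, ∑ j, S' i j * ψ (util t i) := by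
      have := h0
      simp only [mul_sub] at this
      rw [Finset.sum_congr rfl (fun i _ => Finset.sum_sub_distrib _ _), Finset.sum_sub_distrib] at this
      linarith
    rw [e6, e7]
    have e8 : (∑ i, ∑ j, S' i j * ψ (util t i))
        = ∑ i, (∑ j, S' i j) * ψ (util t i) := by
      exact Finset.sum_congr rfl fun i _ => (Finset.sum_mul _ _ _).symm
    rw [e8]
    simp only [hrow]
    rw [Fintype.sum_sum_type]
    simp [hub]
  rw [step1, step2, hT]
  have e9 : ∀ j, ⟪vtilb t j, β j • fb t j⟫ = β j * ⟪vtilb t j, fb t j⟫ :=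
    fun j => real_inner_smul_right _ _ _
  simp only [e9, mul_sub, neg_neg]
  rw [Finset.sum_sub_distrib]
end

section
/- Let Q ∈ ℝ^{m×m}, V_t ∈ ℝ^{m×r}, V̄_t ∈ ℝ^{s×r}, and let P_t ∈ ℝ^{r×s} satisfy P_t V̄_t = I_r (P_t is a left inverse of V̄_t) and V_t P_t 𝟙_s = 𝟙_m. Let V̄_bt ∈ ℝ^{b×r}, let B̄_b ∈ ℝ^{b×b} be diagonal, and define Q̄ = P_tᵀ (V_tᵀ Q V_t) P_t ∈ ℝ^{s×s} and Ē = V̄_bt P_t ∈ ℝ^{b×s}. Then the following are equivalent: (i) Q̄ᵀ 𝟙_s = Ēᵀ B̄_b 𝟙_b; (ii) 𝟙_mᵀ Q V_t = 𝟙_bᵀ B̄_b V̄_bt (as row vectors in ℝ^{r}). -/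
open Matrix

/-- The zero row sum moment condition for boundary hyper-reduction is independent
of the hyper-reduced volume matrix: `Q̄ᵀ𝟙 = Ēᵀ B̄_b 𝟙` is equivalent to the
moment condition `𝟙ᵀ Q V_t = 𝟙ᵀ B̄_b V̄_bt`. -/
theorem stmt14 (m r s b : ℕ)
    (Q : Matrix (Fin m) (Fin m) ℝ)
    (Vt : Matrix (Fin m) (Fin r) ℝ)
    (Vtbar : Matrix (Fin s) (Fin r) ℝ)
    (Pt : Matrix (Fin r) (Fin s) ℝ)
    (hleft : Pt * Vtbar = 1)
    (hone : Vt *ᵥ (Pt *ᵥ fun _ => (1 : ℝ)) = fun _ => (1 : ℝ))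
    (Vbt : Matrix (Fin b) (Fin r) ℝ)
    (β : Fin b → ℝ)
    (Qbar : Matrix (Fin s) (Fin s) ℝ)
    (hQbar : Qbar = Ptᵀ * (Vtᵀ * Q * Vt) * Pt)
    (E : Matrix (Fin b) (Fin s) ℝ) (hE : E = Vbt * Pt) :
    (Qbarᵀ *ᵥ (fun _ => (1 : ℝ)) = Eᵀ *ᵥ (Matrix.diagonal β *ᵥ fun _ => (1 : ℝ))) ↔
    ((fun _ => (1 : ℝ)) ᵥ* (Q * Vt) = (fun _ => (1 : ℝ)) ᵥ* (Matrix.diagonal β * Vbt)) := by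
  subst hQbar hE
  have hL : (Ptᵀ * (Vtᵀ * Q * Vt) * Pt)ᵀ *ᵥ (fun _ => (1 : ℝ))
      = Ptᵀ *ᵥ ((fun _ => (1 : ℝ)) ᵥ* (Q * Vt)) := by
    simp only [Matrix.transpose_mul, Matrix.transpose_transpose, ← Matrix.mulVec_mulVec]
    rw [hone, ← Matrix.mulVec_transpose, Matrix.transpose_mul]
    simp [← Matrix.mulVec_mulVec]
  have hR : (Vbt * Pt)ᵀ *ᵥ (Matrix.diagonal β *ᵥ fun _ => (1 : ℝ))
      = Ptᵀ *ᵥ ((fun _ => (1 : ℝ)) ᵥ* (Matrix.diagonal β * Vbt)) := by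
    rw [← Matrix.mulVec_transpose, Matrix.transpose_mul, Matrix.transpose_mul,
      Matrix.diagonal_transpose]
    simp [← Matrix.mulVec_mulVec]
  have hinj : Function.Injective (fun v : Fin r → ℝ => Ptᵀ *ᵥ v) := by
    intro u v huv
    have := congrArg (fun w => Vtbarᵀ *ᵥ w) huv
    simpa [Matrix.mulVec_mulVec, ← Matrix.transpose_mul, hleft] using this
  rw [hL, hR]
  exact hinj.eq_iff
end

section
/- Let Q̄ ∈ ℝ^{s×s} satisfy Q̄·𝟙_s = 0, let Ē ∈ ℝ^{b×s} satisfy Ē·𝟙_s = 𝟙_b, and let B̄_b ∈ ℝ^{b×b} be diagonal. Define the hybridized operator Q̄_h = ½ [ [Q̄ − Q̄ᵀ, Ēᵀ B̄_b], [−B̄_b Ē, B̄_b] ] ∈ ℝ^{(s+b)×(s+b)}. Then Q̄_h·𝟙_{s+b} = 0 if and only if Q̄ᵀ·𝟙_s = Ēᵀ B̄_b·𝟙_b. -/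
open Matrix

/-- The hybridized SBP operator `Q̄_h` has zero row sums if and only if the
boundary moment condition `Q̄ᵀ𝟙 = Ēᵀ B̄_b 𝟙` holds. -/
theorem stmt15 (s b : ℕ)
    (Qbar : Matrix (Fin s) (Fin s) ℝ)
    (hQ1 : Qbar *ᵥ (fun _ => (1 : ℝ)) = 0)
    (E : Matrix (Fin b) (Fin s) ℝ)
    (hE1 : E *ᵥ (fun _ => (1 : ℝ)) = fun _ => (1 : ℝ))
    (β : Fin b → ℝ)
    (Qh : Matrix (Fin s ⊕ Fin b) (Fin s ⊕ Fin b) ℝ)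
    (hQh : Qh = (1 / 2 : ℝ) • Matrix.fromBlocks
      (Qbar - Qbarᵀ) (Eᵀ * Matrix.diagonal β)
      (-(Matrix.diagonal β * E)) (Matrix.diagonal β)) :
    Qh *ᵥ (fun _ => (1 : ℝ)) = 0 ↔
      Qbarᵀ *ᵥ (fun _ => (1 : ℝ)) = Eᵀ *ᵥ (Matrix.diagonal β *ᵥ fun _ => (1 : ℝ)) := by
  subst hQh
  have h1 : (fun _ : Fin s ⊕ Fin b => (1:ℝ))
      = Sum.elim (fun _ => (1:ℝ)) (fun _ => (1:ℝ)) := by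
    funext i; cases i <;> rfl
  rw [h1, smul_mulVec, fromBlocks_mulVec]
  simp only [Sum.elim_comp_inl, Sum.elim_comp_inr]
  have htop : (Qbar - Qbarᵀ) *ᵥ (fun _ => (1:ℝ)) + (Eᵀ * Matrix.diagonal β) *ᵥ (fun _ => (1:ℝ))
      = Eᵀ *ᵥ (Matrix.diagonal β *ᵥ fun _ => (1:ℝ)) - Qbarᵀ *ᵥ (fun _ => (1:ℝ)) := by
    rw [sub_mulVec, hQ1, ← mulVec_mulVec]
    abel
  have hbot : (-(Matrix.diagonal β * E)) *ᵥ (fun _ => (1:ℝ)) + Matrix.diagonal β *ᵥ (fun _ => (1:ℝ))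
      = 0 := by
    rw [neg_mulVec, ← mulVec_mulVec, hE1]
    abel
  rw [htop, hbot]
  constructor
  · intro h
    have := congrFun h
    have h2 : ((1:ℝ)/2) • (Eᵀ *ᵥ (Matrix.diagonal β *ᵥ fun _ => (1:ℝ)) - Qbarᵀ *ᵥ (fun _ => (1:ℝ))) = 0 := by
      funext i
      have := this (Sum.inl i)
      simpa using this
    have h3 := smul_eq_zero.mp h2
    rcases h3 with h3 | h3
    · norm_num at h3
    · exact (sub_eq_zero.mp h3).symm
  · intro h
    rw [h, sub_self]
    funext i; cases i <;> simp
end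

section
/- Let d, m, n ∈ ℕ. For each i = 1,…,d let Qⁱ ∈ ℝ^{m×m} be skew-symmetric with zero row sums (Qⁱ·𝟙 = 0), let M : {1,…,m} → ℝ with M(j) > 0 for all j, let S : ℝⁿ → ℝ be differentiable with gradient v = ∇S, and for each i let ψⁱ : ℝⁿ → ℝ and let f_ECⁱ : ℝⁿ × ℝⁿ → ℝⁿ be an entropy conservative two-point flux for (v, ψⁱ), i.e. f_ECⁱ(uL,uR) = f_ECⁱ(uR,uL) and ⟨v(uL) − v(uR), f_ECⁱ(uL,uR)⟩ = ψⁱ(uL) − ψⁱ(uR) for all uL, uR. Suppose u : ℝ → ({1,…,m} → ℝⁿ) is differentiable and satisfies, for every j and t, M(j)·(d/dt)u_j(t) + Σ_{i=1}^{d} 2 Σ_{k=1}^{m} Qⁱ_{jk} f_ECⁱ(u_j(t), u_k(t)) = 0. Then the total entropy t ↦ Σ_{j=1}^{m} M(j) S(u_j(t)) has zero derivative, i.e. is constant in time. -/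
open Matrix
open scoped RealInnerProductSpace

/-- Semi-discrete entropy conservation for the multi-dimensional entropy
conservative DG discretization on a periodic domain, with one skew-symmetric
zero-row-sum differentiation matrix and one entropy conservative flux per
coordinate direction. -/
theorem stmt17 (d m n : ℕ)
    (Q : Fin d → Matrix (Fin m) (Fin m) ℝ)
    (hskew : ∀ i, (Q i)ᵀ = -(Q i))
    (hrow : ∀ i, Q i *ᵥ (fun _ => (1 : ℝ)) = 0)
    (M : Fin m → ℝ) (hM : ∀ j, 0 < M j)
    (S : EuclideanSpace ℝ (Fin n) → ℝ)
    (v : EuclideanSpace ℝ (Fin n) → EuclideanSpace ℝ (Fin n))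
    (hS : ∀ x, HasGradientAt S (v x) x)
    (ψ : Fin d → EuclideanSpace ℝ (Fin n) → ℝ)
    (fEC : Fin d → EuclideanSpace ℝ (Fin n) → EuclideanSpace ℝ (Fin n) →
      EuclideanSpace ℝ (Fin n))
    (hsymm : ∀ i uL uR, fEC i uL uR = fEC i uR uL)
    (hEC : ∀ i uL uR, ⟪v uL - v uR, fEC i uL uR⟫ = ψ i uL - ψ i uR)
    (u u' : ℝ → Fin m → EuclideanSpace ℝ (Fin n))
    (hu : ∀ j t, HasDerivAt (fun s => u s j) (u' t j) t)
    (hscheme : ∀ j t,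
      M j • u' t j + ∑ i, (2 : ℝ) • ∑ k, Q i j k • fEC i (u t j) (u t k) = 0) :
    ∀ t, HasDerivAt (fun s => ∑ j, M j * S (u s j)) 0 t := by
  intro t
  set a : Fin d → Fin m → Fin m → ℝ :=
    fun i j k => ⟪v (u t j), fEC i (u t j) (u t k)⟫ with ha
  -- derivative of each summand
  have hderiv : ∀ j : Fin m, HasDerivAt (fun s => M j * S (u s j))
      (M j * ⟪v (u t j), u' t j⟫) t := by
    intro j
    have h1 : HasDerivAt (fun s => S (u s j)) (⟪v (u t j), u' t j⟫) t := by
      have := ((hS (u t j)).hasFDerivAt.comp_hasDerivAt t (hu j t))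
      simpa [InnerProductSpace.toDual_apply_apply, Function.comp_def] using this
    exact h1.const_mul (M j)
  have hsum : HasDerivAt (fun s => ∑ j, M j * S (u s j))
      (∑ j, M j * ⟪v (u t j), u' t j⟫) t :=
    HasDerivAt.fun_sum fun j _ => hderiv j
  -- compute the total derivative
  have key : ∑ j, M j * ⟪v (u t j), u' t j⟫ = 0 := by
    have hper : ∀ j : Fin m, M j * ⟪v (u t j), u' t j⟫
        = -∑ i, ∑ k, 2 * Q i j k * a i j k := by
      intro j
      have h := hscheme j t
      have h2 : M j • u' t j = -∑ i, (2 : ℝ) • ∑ k, Q i j k • fEC i (u t j) (u t k) := by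
        linear_combination (norm := module) h
      calc M j * ⟪v (u t j), u' t j⟫
          = ⟪v (u t j), M j • u' t j⟫ := by rw [real_inner_smul_right]
        _ = ⟪v (u t j), -∑ i, (2 : ℝ) • ∑ k, Q i j k • fEC i (u t j) (u t k)⟫ := by rw [h2]
        _ = -∑ i, ∑ k, 2 * Q i j k * a i j k := by
            rw [inner_neg_right, inner_sum]
            congr 1
            refine Finset.sum_congr rfl fun i _ => ?_
            rw [real_inner_smul_right, inner_sum]
            rw [Finset.mul_sum]
            refine Finset.sum_congr rfl fun k _ => ?_
            rw [real_inner_smul_right]; ring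
    rw [Finset.sum_congr rfl fun j _ => hper j, Finset.sum_neg_distrib, neg_eq_zero]
    rw [Finset.sum_comm]
    refine Finset.sum_eq_zero fun i _ => ?_
    -- Σ_{j,k} 2 Q_{jk} a_{jk} = 0
    have hrowsum : ∀ j : Fin m, ∑ k, Q i j k = 0 := by
      intro j
      have := congrFun (hrow i) j
      simpa [mulVec, dotProduct] using this
    have hcolsum : ∀ k : Fin m, ∑ j, Q i j k = 0 := by
      intro k
      have h1 : ∀ j, Q i j k = -(Q i k j) := by
        intro j
        have := congrFun (congrFun (hskew i) k) j
        simpa [Matrix.transpose_apply] using this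
      simp only [fun j => h1 j]
      simp [hrowsum k]
    set T1 : ℝ := ∑ j, ∑ k, Q i j k * a i j k with hT1
    set T2 : ℝ := ∑ j, ∑ k, Q i j k * a i k j with hT2
    have e3 : T1 = -T2 := by
      rw [hT1, hT2, Finset.sum_comm (f := fun j k => Q i j k * a i j k),
        ← Finset.sum_neg_distrib]
      refine Finset.sum_congr rfl fun k _ => ?_
      rw [← Finset.sum_neg_distrib]
      refine Finset.sum_congr rfl fun j _ => ?_
      have := congrFun (congrFun (hskew i) j) k
      simp only [Matrix.transpose_apply, Matrix.neg_apply] at this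
      rw [this]; ring
    have hlhs : (∑ j, ∑ k, 2 * Q i j k * a i j k) = 2 * T1 := by
      rw [hT1, Finset.mul_sum]
      refine Finset.sum_congr rfl fun j _ => ?_
      rw [Finset.mul_sum]
      exact Finset.sum_congr rfl fun k _ => by ring
    have hrhs : (∑ j, ∑ k, Q i j k * (a i j k - a i k j)) = T1 - T2 := by
      rw [hT1, hT2, ← Finset.sum_sub_distrib]
      refine Finset.sum_congr rfl fun j _ => ?_
      rw [← Finset.sum_sub_distrib]
      exact Finset.sum_congr rfl fun k _ => by ring
    have hswap : (∑ j, ∑ k, 2 * Q i j k * a i j k)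
        = ∑ j, ∑ k, Q i j k * (a i j k - a i k j) := by
      rw [hlhs, hrhs]; linarith
    rw [hswap]
    have hdiff : ∀ j k : Fin m, a i j k - a i k j = ψ i (u t j) - ψ i (u t k) := by
      intro j k
      have h4 : a i k j = ⟪v (u t k), fEC i (u t j) (u t k)⟫ := by
        rw [ha]; simp only; rw [hsymm i (u t k) (u t j)]
      rw [ha] at *
      simp only at h4 ⊢
      rw [h4, ← inner_sub_left, hEC]
    calc (∑ j, ∑ k, Q i j k * (a i j k - a i k j))
        = ∑ j, ∑ k, (Q i j k * ψ i (u t j) - Q i j k * ψ i (u t k)) := by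
          refine Finset.sum_congr rfl fun j _ => Finset.sum_congr rfl fun k _ => ?_
          rw [hdiff]; ring
      _ = (∑ j, ∑ k, Q i j k * ψ i (u t j)) - ∑ j, ∑ k, Q i j k * ψ i (u t k) := by
          rw [← Finset.sum_sub_distrib]
          exact Finset.sum_congr rfl fun j _ => by rw [← Finset.sum_sub_distrib]
      _ = 0 := by
          have e1 : ∑ j, ∑ k, Q i j k * ψ i (u t j) = 0 :=
            Finset.sum_eq_zero fun j _ => by
              rw [← Finset.sum_mul, hrowsum, zero_mul]
          have e2 : ∑ j, ∑ k, Q i j k * ψ i (u t k) = 0 := by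
            rw [Finset.sum_comm]
            exact Finset.sum_eq_zero fun k _ => by
              rw [← Finset.sum_mul, hcolsum, zero_mul]
          rw [e1, e2, sub_zero]
  rw [← key]
  exact hsum
end
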